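/- arXiv:2207.06218 — 7 statements merged into one kernel-verified Lean document; each statement's English description precedes it below -/
import Mathlib

section
/- Harmonic centrality is score monotone on undirected graphs: if G' is obtained from G by adding an edge between non-adjacent vertices x and y, then the harmonic centrality of x in G' is strictly greater than in G, and likewise for y. -/
/-- The harmonic centrality of `v`: the sum over all vertices `u ≠ v` of the
reciprocal of the shortest-path distance `d(v,u)`. Since `SimpleGraph.dist` is `0`
for unreachable pairs and division by zero is `0` in `ℚ`, unreachable vertices
contribute `0`, as in the usual convention. -/
noncomputable def harmonicCentrality {V : Type*} [Fintype V] [DecidableEq V]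
    (G : SimpleGraph V) (v : V) : ℚ :=
  ∑ u ∈ Finset.univ.erase v, (1 : ℚ) / (G.dist v u)

lemma key {V : Type*} [Fintype V] [DecidableEq V]
    (G G' : SimpleGraph V) (x y : V)
    (hne : x ≠ y) (hnadj : ¬ G.Adj x y) (hle : G ≤ G') (hadj : G'.Adj x y) :
    harmonicCentrality G' x > harmonicCentrality G x := by
  unfold harmonicCentrality
  apply Finset.sum_lt_sum
  · intro u hu
    by_cases h0 : G.dist x u = 0
    · rw [h0]
      simp
    · have hr : G.Reachable x u := SimpleGraph.Reachable.of_dist_ne_zero h0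
      have hle' : G'.dist x u ≤ G.dist x u := hr.dist_anti hle
      have h0' : G'.dist x u ≠ 0 := by
        rw [SimpleGraph.dist_ne_zero_iff_ne_and_reachable]
        exact ⟨(Finset.ne_of_mem_erase hu).symm, hr.mono hle⟩
      apply one_div_le_one_div_of_le
      · exact_mod_cast Nat.pos_of_ne_zero h0'
      · exact_mod_cast hle'
  · refine ⟨y, Finset.mem_erase.mpr ⟨hne.symm, Finset.mem_univ y⟩, ?_⟩
    rw [SimpleGraph.dist_eq_one_iff_adj.mpr hadj]
    by_cases h0 : G.dist x y = 0
    · rw [h0]; norm_num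
    · have h1 : G.dist x y ≠ 1 := fun h' => hnadj (SimpleGraph.dist_eq_one_iff_adj.mp h')
      have h2 : 2 ≤ G.dist x y := by omega
      calc (1 : ℚ) / (G.dist x y) ≤ 1 / 2 := by
            apply one_div_le_one_div_of_le <;> norm_num <;> exact_mod_cast h2
        _ < 1 / 1 := by norm_num

/-- Harmonic centrality is score monotone on undirected graphs: adding an edge
between non-adjacent vertices `x` and `y` strictly increases the harmonic
centrality of both `x` and `y`. -/
theorem harmonic_score_monotone {V : Type*} [Fintype V] [DecidableEq V]
    (G G' : SimpleGraph V) (x y : V)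
    (hne : x ≠ y) (hnadj : ¬ G.Adj x y)
    (hG' : G' = G ⊔ SimpleGraph.fromEdgeSet {s(x, y)}) :
    harmonicCentrality G' x > harmonicCentrality G x ∧ harmonicCentrality G' y > harmonicCentrality G y := by
  have hle : G ≤ G' := hG' ▸ le_sup_left
  have hadj : G'.Adj x y := by
    rw [hG']
    right
    simp [SimpleGraph.fromEdgeSet_adj, hne]
  exact ⟨key G G' x y hne hnadj hle hadj,
    key G G' y x hne.symm (fun h => hnadj h.symm) hle hadj.symm⟩
end

section
/- If φ: G → B is a graph fibration surjective on nodes, and u is a row vector indexed by nodes of B, then lifting along φ commutes with adjacency-matrix multiplication: u^φ G = (u B)^φ, where u^φ is the vector defined by (u^φ)_i = u_{φ(i)} and G, B denote adjacency matrices counting arcs with multiplicity. -/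
/-- A directed multigraph: a set of nodes, a set of arcs, and source/target maps. -/
structure Multigraph (N A : Type*) where
  src : A → N
  tgt : A → N

/-- The adjacency matrix of a multigraph: entry `(x, y)` counts the arcs from `x`
to `y` with multiplicity. -/
noncomputable def adjMat {N A : Type*} [Fintype A] [DecidableEq N]
    (G : Multigraph N A) : Matrix N N ℚ :=
  fun x y => ((Finset.univ.filter fun a => G.src a = x ∧ G.tgt a = y).card : ℚ)

/-- A graph fibration `φ : G → B`: a morphism of multigraphs (commuting with source
and target maps) such that every arc of `B` lifts uniquely at each node of `G` in
the fiber over its target. -/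
structure Fibration {N A N' A' : Type*} (G : Multigraph N A) (B : Multigraph N' A') where
  nodeMap : N → N'
  arcMap : A → A'
  src_comm : ∀ a : A, B.src (arcMap a) = nodeMap (G.src a)
  tgt_comm : ∀ a : A, B.tgt (arcMap a) = nodeMap (G.tgt a)
  lift : ∀ (a : A') (x : N), nodeMap x = B.tgt a →
    ∃! (la : A), arcMap la = a ∧ G.tgt la = x

/-- Row vector times adjacency matrix, rewritten as a sum over arcs with a fixed target. -/
lemma vec_adj_sum {N A : Type*} [Fintype N] [Fintype A] [DecidableEq N]
    (G : Multigraph N A) (v : N → ℚ) (y : N) :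
    ∑ x, v x * adjMat G x y
      = ∑ a ∈ Finset.univ.filter (fun a => G.tgt a = y), v (G.src a) := by
  rw [← Finset.sum_fiberwise (Finset.univ.filter fun a => G.tgt a = y) G.src
      (fun a => v (G.src a))]
  refine Finset.sum_congr rfl fun x _ => ?_
  have : (Finset.univ.filter fun a => G.tgt a = y).filter (fun a => G.src a = x)
      = Finset.univ.filter fun a => G.src a = x ∧ G.tgt a = y := by
    ext a; simp [and_comm]
  rw [this, adjMat]
  refine Eq.symm ?_
  calc ∑ a ∈ Finset.univ.filter (fun a => G.src a = x ∧ G.tgt a = y), v (G.src a)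
      = ∑ _a ∈ Finset.univ.filter (fun a => G.src a = x ∧ G.tgt a = y), v x := by
        refine Finset.sum_congr rfl fun a ha => ?_
        simp only [Finset.mem_filter] at ha
        rw [ha.2.1]
    _ = _ := by simp [mul_comm]

/-- If `φ : G → B` is a graph fibration surjective on nodes, then lifting a row
vector along `φ` commutes with multiplication by the adjacency matrices:
`u^φ G = (u B)^φ`. -/
theorem fibration_vecMul_comm {N A N' A' : Type*}
    [Fintype N] [Fintype N'] [Fintype A] [Fintype A'] [DecidableEq N] [DecidableEq N']
    (G : Multigraph N A) (B : Multigraph N' A') (φ : Fibration G B)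
    (hsurj : Function.Surjective φ.nodeMap) (u : N' → ℚ) :
    Matrix.vecMul (u ∘ φ.nodeMap) (adjMat G) = (Matrix.vecMul u (adjMat B)) ∘ φ.nodeMap := by
  funext y
  show ∑ x, (u (φ.nodeMap x)) * adjMat G x y = ∑ x', u x' * adjMat B x' (φ.nodeMap y)
  rw [vec_adj_sum B u (φ.nodeMap y)]
  refine Eq.trans (vec_adj_sum G (fun x => u (φ.nodeMap x)) y) ?_
  refine Finset.sum_bij (fun a _ => φ.arcMap a) ?_ ?_ ?_ ?_
  · intro a ha
    simp only [Finset.mem_filter, Finset.mem_univ, true_and] at ha ⊢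
    rw [φ.tgt_comm, ha]
  · intro a ha b hb hab
    simp only [Finset.mem_filter, Finset.mem_univ, true_and] at ha hb
    have hlift := φ.lift (φ.arcMap a) (G.tgt a) (by rw [φ.tgt_comm])
    obtain ⟨la, _, huniq⟩ := hlift
    have h1 := huniq a ⟨rfl, rfl⟩
    have h2 := huniq b ⟨hab.symm, by rw [hb, ha]⟩
    rw [h1, h2]
  · intro a' ha'
    simp only [Finset.mem_filter, Finset.mem_univ, true_and] at ha'
    obtain ⟨la, ⟨hmap, htgt⟩, _⟩ := φ.lift a' y ha'.symm
    exact ⟨la, by simp [htgt], hmap⟩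
  · intro a ha
    simp [φ.src_comm]
end

section
/- For every integer r ≥ 1, with j = 26r and k = 247r, the harmonic-centrality values satisfy: pre(0) < pre(1), pre(0) > pre(4), and post(0) < post(4), where pre(0) = 137/60 + j + k/4 + 11r/30, pre(1) = 137/60 + j/6 + k/3 + 3r/2, pre(4) = 137/60 + j/6 + k/3 + 5r/6, post(0) = 10/3 + j + k/4 + 5r/6, post(4) = 29/12 + j/4 + k/3 + 5r/6. -/
/-- For every `r ≥ 1`, with `j = 26r` and `k = 247r`, the harmonic centralities in
the parametric counterexample satisfy `pre(0) < pre(1)`, `pre(0) > pre(4)` and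
`post(0) < post(4)`, witnessing a bottom violation of rank monotonicity for
harmonic centrality. -/
theorem harmonic_bottom_violation (r j k : ℕ) (hr : 1 ≤ r) (hj : j = 26 * r)
    (hk : k = 247 * r) :
    (137 / 60 + (j : ℚ) + k / 4 + 11 * r / 30 < 137 / 60 + (j : ℚ) / 6 + k / 3 + 3 * r / 2) ∧
    (137 / 60 + (j : ℚ) + k / 4 + 11 * r / 30 > 137 / 60 + (j : ℚ) / 6 + k / 3 + 5 * r / 6) ∧
    (10 / 3 + (j : ℚ) + k / 4 + 5 * r / 6 < 29 / 12 + (j : ℚ) / 4 + k / 3 + 5 * r / 6) := by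
  subst hj hk
  have hr' : (1 : ℚ) ≤ (r : ℚ) := by exact_mod_cast hr
  push_cast
  refine ⟨by nlinarith, by nlinarith, by nlinarith⟩
end

section
/- For all integers k ≥ 13, setting h = k and j = ⌊(k² − 4k − 15)/2⌋, the betweenness values satisfy pre(0) < pre(1), pre(0) > pre(2), and post(0) < post(2), where pre(0) = post(0) = k(2h+2j+k+11)/2, pre(1) = (h² + (2j+2k+11)h + 3k + 7)/2, pre(2) = ((2h+2)j + 3h + k + 5)/2, and post(2) = ((2h+k+2)j + 3h + 2k + 6)/2. -/
/-- For all integers `k ≥ 13`, setting `h = k` and `j = ⌊(k² − 4k − 15)/2⌋`, the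
betweenness values of the parametric counterexample satisfy `pre(0) < pre(1)`,
`pre(0) > pre(2)` and `post(0) < post(2)` (with `post(0) = pre(0)`), witnessing a
bottom violation of rank monotonicity for betweenness. -/
theorem betweenness_bottom_violation (k h j : ℤ) (hk : 13 ≤ k) (hh : h = k)
    (hj : j = (k ^ 2 - 4 * k - 15) / 2) :
    ((k : ℚ) * (2 * h + 2 * j + k + 11) / 2 <
      ((h : ℚ) ^ 2 + (2 * j + 2 * k + 11) * h + 3 * k + 7) / 2) ∧
    ((k : ℚ) * (2 * h + 2 * j + k + 11) / 2 >
      ((2 * (h : ℚ) + 2) * j + 3 * h + k + 5) / 2) ∧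
    ((k : ℚ) * (2 * h + 2 * j + k + 11) / 2 <
      ((2 * (h : ℚ) + k + 2) * j + 3 * h + 2 * k + 6) / 2) := by
  have hub : 2 * j ≤ k ^ 2 - 4 * k - 15 := by
    have h1 := Int.mul_ediv_add_emod (k ^ 2 - 4 * k - 15) 2
    have h2 := Int.emod_nonneg (k ^ 2 - 4 * k - 15) (by norm_num : (2:ℤ) ≠ 0)
    have h3 := Int.emod_lt_of_pos (k ^ 2 - 4 * k - 15) (by norm_num : (0:ℤ) < 2)
    omega
  have hlb : k ^ 2 - 4 * k - 16 ≤ 2 * j := by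
    have h1 := Int.mul_ediv_add_emod (k ^ 2 - 4 * k - 15) 2
    have h2 := Int.emod_nonneg (k ^ 2 - 4 * k - 15) (by norm_num : (2:ℤ) ≠ 0)
    have h3 := Int.emod_lt_of_pos (k ^ 2 - 4 * k - 15) (by norm_num : (0:ℤ) < 2)
    omega
  have qub : 2 * (j : ℚ) ≤ (k : ℚ) ^ 2 - 4 * k - 15 := by exact_mod_cast hub
  have qlb : (k : ℚ) ^ 2 - 4 * k - 16 ≤ 2 * j := by exact_mod_cast hlb
  have qk : (13 : ℚ) ≤ (k : ℚ) := by exact_mod_cast hk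
  subst hh
  refine ⟨by nlinarith, by nlinarith, by nlinarith [sq_nonneg ((h:ℚ) - 13)]⟩
end

section
/- Katz's index is score monotone on undirected graphs: if G' is obtained from G by adding an edge between non-adjacent vertices x and y, then for any α with 0 < α < 1/ρ(G'), the Katz score [1(I−αG')^{-1}]_x strictly exceeds [1(I−αG)^{-1}]_x, and similarly for y. -/
/-!
Since `α ρ(G') < 1`, Gelfand's formula makes the Neumann series `Σ (αG')^k` converge, and the
entrywise comparison `0 ≤ αG ≤ αG'` makes `Σ (αG)^k` converge too, to `(I - αG)⁻¹`. Term by term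
the second series is entrywise below the first, and the `k = 1` terms already differ at the new
entry `(y, x)`; summing column `x` gives the strict inequality of Katz scores.
-/

/-- The spectral radius of a real square matrix: the supremum of the absolute values
of its (complex) eigenvalues. -/
noncomputable def specRad {n : Type*} [Fintype n] [DecidableEq n]
    (M : Matrix n n ℝ) : ℝ :=
  sSup ((fun z : ℂ => ‖z‖) '' spectrum ℂ (M.map (algebraMap ℝ ℂ)))

/-- Katz's index with parameter `α` of a vertex `v`:
`[𝟏 (I − αG)⁻¹]_v = Σ_{i≥0} α^i (𝟏 G^i)_v`. -/
noncomputable def katz {V : Type*} [Fintype V] [DecidableEq V]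
    (A : Matrix V V ℝ) (α : ℝ) (v : V) : ℝ :=
  Matrix.vecMul (fun _ => (1 : ℝ)) (1 - α • A)⁻¹ v

open Filter

theorem summable_pow_of_spectralRadius_lt_one {A : Type*} [NormedRing A] [NormedAlgebra ℂ A]
    [CompleteSpace A] {a : A} (ha : spectralRadius ℂ a < 1) : Summable (a ^ ·) := by
  obtain ⟨r, hρr, hr1⟩ := ENNReal.lt_iff_exists_nnreal_btwn.mp ha
  have hbound : ∀ᶠ n : ℕ in atTop, ‖a ^ n‖ ≤ r ^ n := by
    filter_upwards [(spectrum.pow_norm_pow_one_div_tendsto_nhds_spectralRadius a)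
      |>.eventually_lt_const hρr, eventually_gt_atTop 0] with n hroot hn
    rw [ENNReal.ofReal_lt_coe_iff (by positivity), one_div] at hroot
    have := (Real.rpow_inv_lt_iff_of_pos (norm_nonneg _) r.2 (Nat.cast_pos.mpr hn)).mp hroot
    exact_mod_cast this.le
  exact .of_norm_bounded_eventually_nat (summable_geometric_of_lt_one r.2 (mod_cast hr1)) hbound

namespace Matrix

variable {n : Type*} [Fintype n] [DecidableEq n]

theorem hasSum_pow_inv_one_sub {R : Type*} [CommRing R] [TopologicalSpace R]
    [IsTopologicalRing R] [T2Space R] {M : Matrix n n R} (h : Summable (M ^ ·)) :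
    HasSum (M ^ ·) (1 - M)⁻¹ := by
  rw [inv_eq_right_inv h.one_sub_mul_tsum_pow]
  exact h.hasSum

section LinftyOpNorm

attribute [local instance] Matrix.linftyOpNormedRing Matrix.linftyOpNormedAlgebra

theorem summable_pow_of_spectralRadius_map_lt_one {M : Matrix n n ℝ}
    (h : spectralRadius ℂ (M.map (algebraMap ℝ ℂ)) < 1) : Summable (M ^ ·) := by
  have hc := summable_pow_of_spectralRadius_lt_one h
  simp_rw [← Matrix.map_pow] at hc
  simpa [Function.comp_def] using hc.map Complex.reAddGroupHom.mapMatrix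
    (continuous_id.matrix_map Complex.continuous_re)

end LinftyOpNorm

theorem norm_le_specRad {M : Matrix n n ℝ} {z : ℂ}
    (hz : z ∈ spectrum ℂ (M.map (algebraMap ℝ ℂ))) : ‖z‖ ≤ specRad M :=
  le_csSup ((finite_spectrum _).image _).bddAbove ⟨z, hz, rfl⟩

theorem spectralRadius_map_smul_le {M : Matrix n n ℝ} {α : ℝ} (hα : 0 < α) :
    spectralRadius ℂ ((α • M).map (algebraMap ℝ ℂ)) ≤ ENNReal.ofReal (α * specRad M) := by
  refine iSup₂_le fun z hz => ?_
  have hunit : (α • M).map (algebraMap ℝ ℂ) =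
      Units.mk0 (α : ℂ) (mod_cast hα.ne') • M.map (algebraMap ℝ ℂ) := by
    ext i j
    simp [Units.smul_def]
  rw [hunit, spectrum.unit_smul_eq_smul] at hz
  obtain ⟨w, hw, rfl⟩ := hz
  rw [← ENNReal.ofReal_coe_nnreal, coe_nnnorm]
  refine ENNReal.ofReal_le_ofReal ?_
  simp only [Units.val_mk0, smul_eq_mul, norm_mul, Complex.norm_real, Real.norm_of_nonneg hα.le]
  exact mul_le_mul_of_nonneg_left (norm_le_specRad hw) hα.le

section Nonneg

variable {α : Type*} [Semiring α] [PartialOrder α] [IsOrderedRing α] {M N : Matrix n n α}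

theorem pow_apply_le_pow_apply (hM : ∀ i j, 0 ≤ M i j) (hMN : ∀ i j, M i j ≤ N i j) (k : ℕ)
    (i j : n) : (M ^ k) i j ≤ (N ^ k) i j := by
  induction k generalizing j with
  | zero => rfl
  | succ k ih =>
    rw [pow_succ, pow_succ, mul_apply, mul_apply]
    exact Finset.sum_le_sum fun l _ =>
      mul_le_mul (ih l) (hMN l j) (hM l j) ((pow_apply_nonneg hM k i l).trans (ih l))

end Nonneg

section Real

variable {M N : Matrix n n ℝ}

theorem summable_pow_of_apply_le (hM : ∀ i j, 0 ≤ M i j) (hMN : ∀ i j, M i j ≤ N i j)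
    (hN : Summable (N ^ ·)) : Summable (M ^ ·) :=
  Pi.summable.mpr fun i => Pi.summable.mpr fun j =>
    .of_nonneg_of_le (fun k => pow_apply_nonneg hM k i j)
      (fun k => pow_apply_le_pow_apply hM hMN k i j) (Pi.summable.mp (Pi.summable.mp hN i) j)

theorem hasSum_pow_apply_inv_one_sub (h : Summable (M ^ ·)) (i j : n) :
    HasSum (fun k => (M ^ k) i j) ((1 - M)⁻¹ i j) := by
  have hmat := hasSum_pow_inv_one_sub h
  exact Pi.hasSum.mp (Pi.hasSum.mp hmat i) j

theorem inv_one_sub_apply_le (hM : ∀ i j, 0 ≤ M i j) (hMN : ∀ i j, M i j ≤ N i j)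
    (hN : Summable (N ^ ·)) (i j : n) : (1 - M)⁻¹ i j ≤ (1 - N)⁻¹ i j :=
  hasSum_le (pow_apply_le_pow_apply hM hMN · i j)
    (hasSum_pow_apply_inv_one_sub (summable_pow_of_apply_le hM hMN hN) i j)
    (hasSum_pow_apply_inv_one_sub hN i j)

theorem inv_one_sub_apply_lt (hM : ∀ i j, 0 ≤ M i j) (hMN : ∀ i j, M i j ≤ N i j)
    (hN : Summable (N ^ ·)) {i j : n} (hij : M i j < N i j) :
    (1 - M)⁻¹ i j < (1 - N)⁻¹ i j :=
  hasSum_lt (i := 1) (pow_apply_le_pow_apply hM hMN · i j) (by simpa using hij)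
    (hasSum_pow_apply_inv_one_sub (summable_pow_of_apply_le hM hMN hN) i j)
    (hasSum_pow_apply_inv_one_sub hN i j)

end Real

end Matrix

namespace SimpleGraph

variable {V α : Type*} {G G' : SimpleGraph V} [DecidableRel G.Adj] [DecidableRel G'.Adj]

theorem adjMatrix_apply_nonneg [Zero α] [One α] [Preorder α] [ZeroLEOneClass α] (v w : V) :
    0 ≤ G.adjMatrix α v w := by
  rw [adjMatrix_apply]
  split_ifs
  exacts [zero_le_one, le_rfl]

theorem adjMatrix_apply_le_of_le [Zero α] [One α] [Preorder α] [ZeroLEOneClass α] (h : G ≤ G')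
    (v w : V) : G.adjMatrix α v w ≤ G'.adjMatrix α v w := by
  by_cases hvw : G.Adj v w
  · simp [hvw, h hvw]
  · simpa [hvw] using adjMatrix_apply_nonneg v w

theorem adjMatrix_apply_lt_of_not_adj [Zero α] [One α] [PartialOrder α] [ZeroLEOneClass α]
    [NeZero (1 : α)] {v w : V} (h : ¬G.Adj v w) (h' : G'.Adj v w) :
    G.adjMatrix α v w < G'.adjMatrix α v w := by
  simp [h, h']

end SimpleGraph

theorem katz_lt_katz_of_apply_lt {V : Type*} [Fintype V] [DecidableEq V] {A A' : Matrix V V ℝ}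
    {α : ℝ} (hα : 0 < α) (hA : ∀ i j, 0 ≤ A i j) (hAA' : ∀ i j, A i j ≤ A' i j)
    (hsum : Summable ((α • A') ^ ·)) {u v : V} (huv : A u v < A' u v) :
    katz A α v < katz A' α v := by
  have hαA : ∀ i j, 0 ≤ (α • A) i j := fun i j => mul_nonneg hα.le (hA i j)
  have hαAA' : ∀ i j, (α • A) i j ≤ (α • A') i j := fun i j =>
    mul_le_mul_of_nonneg_left (hAA' i j) hα.le
  simp only [katz, Matrix.vecMul, dotProduct, one_mul]
  exact Finset.sum_lt_sum (fun i _ => Matrix.inv_one_sub_apply_le hαA hαAA' hsum i v) ⟨u,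
    Finset.mem_univ u, Matrix.inv_one_sub_apply_lt hαA hαAA' hsum (mul_lt_mul_of_pos_left huv hα)⟩

/-- Katz's index is score monotone on undirected graphs: if `G'` is obtained from
`G` by adding an edge between non-adjacent vertices `x` and `y`, then for any
`0 < α < 1/ρ(G')` the Katz score of `x` (and of `y`) strictly increases. -/
theorem katz_score_monotone {V : Type*} [Fintype V] [DecidableEq V]
    (G G' : SimpleGraph V) [DecidableRel G.Adj] [DecidableRel G'.Adj] (x y : V)
    (hne : x ≠ y) (hnadj : ¬ G.Adj x y)
    (hG' : G' = G ⊔ SimpleGraph.fromEdgeSet {s(x, y)})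
    (α : ℝ) (hα : 0 < α) (hρ : α * specRad (G'.adjMatrix ℝ) < 1) :
    katz (G'.adjMatrix ℝ) α x > katz (G.adjMatrix ℝ) α x ∧
    katz (G'.adjMatrix ℝ) α y > katz (G.adjMatrix ℝ) α y := by
  have hle : G ≤ G' := hG' ▸ le_sup_left
  have hadj : G'.Adj x y := by
    rw [hG']
    exact Or.inr ⟨rfl, hne⟩
  have hsum : Summable ((α • G'.adjMatrix ℝ) ^ ·) :=
    Matrix.summable_pow_of_spectralRadius_map_lt_one <|
      (Matrix.spectralRadius_map_smul_le hα).trans_lt (ENNReal.ofReal_lt_one.mpr hρ)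
  have katz_lt {u v : V} (h : ¬G.Adj u v) (h' : G'.Adj u v) :
      katz (G.adjMatrix ℝ) α v < katz (G'.adjMatrix ℝ) α v :=
    katz_lt_katz_of_apply_lt hα SimpleGraph.adjMatrix_apply_nonneg
      (SimpleGraph.adjMatrix_apply_le_of_le hle) hsum
      (SimpleGraph.adjMatrix_apply_lt_of_not_adj h h')
  exact ⟨katz_lt (fun h => hnadj h.symm) hadj.symm, katz_lt hnadj hadj⟩
end

section
/- For every graph G there exists ᾱ with 0 < ᾱ < 1/ρ(G) such that for all 0 < α ≤ ᾱ, Katz's index with parameter α is strictly rank monotone on G: whenever G' = G + edge x—y, for all z ∉ {x,y}, Katz_G(z) ≤ Katz_G(x) implies Katz_{G'}(z) < Katz_{G'}(x) (and similarly for y). -/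
open Matrix Filter Topology

section Katz

variable {V : Type*} [Fintype V] [DecidableEq V]

lemma katz_eq_one_add_smul (A : Matrix V V ℝ) {α : ℝ} (h : IsUnit (1 - α • A).det) :
    katz A α = 1 + α • ((1 ᵥ* A) ᵥ* (1 - α • A)⁻¹) := by
  set N := (1 - α • A)⁻¹
  have hN : N = 1 + α • (A * N) := by
    have hNinv : (1 - α • A) * N = 1 := mul_nonsing_inv _ h
    rwa [sub_mul, one_mul, sub_eq_iff_eq_add, smul_mul_assoc] at hNinv
  funext v
  change (1 ᵥ* N) v = _
  conv_lhs => rw [hN, vecMul_add, vecMul_one, vecMul_smul, ← vecMul_vecMul]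

lemma tendsto_vecMul_inv_one_sub_smul {𝕜 : Type*} [NontriviallyNormedField 𝕜]
    (A : Matrix V V 𝕜) (w : V → 𝕜) :
    Tendsto (fun α : 𝕜 => w ᵥ* (1 - α • A)⁻¹) (𝓝 0) (𝓝 w) := by
  have hcont : Continuous fun α : 𝕜 => (1 : Matrix V V 𝕜) - α • A := by fun_prop
  have hinv : Tendsto (fun α : 𝕜 => (1 - α • A)⁻¹) (𝓝 0) (𝓝 1) := by
    have hdet : ContinuousAt Ring.inverse (1 - (0 : 𝕜) • A).det := by simp
    simpa [Function.comp_def] using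
      ((continuousAt_matrix_inv _ hdet).comp (x := 0) hcont.continuousAt).tendsto
  simpa [Function.comp_def] using
    ((continuous_const.matrix_vecMul continuous_id).tendsto 1).comp hinv

def KatzStrictMonoColSum (A : Matrix V V ℝ) (α : ℝ) : Prop :=
  ∀ u v, (1 ᵥ* A) u < (1 ᵥ* A) v → katz A α u < katz A α v

lemma eventually_katzStrictMonoColSum (A : Matrix V V ℝ) :
    ∀ᶠ α in 𝓝[>] 0, KatzStrictMonoColSum A α := by
  have hunit : ∀ᶠ α : ℝ in 𝓝 0, IsUnit (1 - α • A).det := by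
    have hdet : Continuous fun α : ℝ => (1 - α • A).det := by fun_prop
    filter_upwards [hdet.continuousAt.eventually_ne (y := 0) (by simp)] with α hα using hα.isUnit
  have hlim := tendsto_pi_nhds.1 (tendsto_vecMul_inv_one_sub_smul A (1 ᵥ* A))
  have horder : ∀ᶠ α : ℝ in 𝓝 0, ∀ u v, (1 ᵥ* A) u < (1 ᵥ* A) v →
      ((1 ᵥ* A) ᵥ* (1 - α • A)⁻¹) u < ((1 ᵥ* A) ᵥ* (1 - α • A)⁻¹) v := by
    refine eventually_all.2 fun u => eventually_all.2 fun v => ?_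
    exact eventually_imp_distrib_left.2 fun huv => (hlim u).eventually_lt (hlim v) huv
  filter_upwards [self_mem_nhdsWithin, nhdsWithin_le_nhds (hunit.and horder)]
    with α (hα : 0 < α) ⟨hα_unit, hα_order⟩ u v huv
  simp only [katz_eq_one_add_smul A hα_unit, Pi.add_apply, Pi.smul_apply, smul_eq_mul]
  exact add_lt_add_right (mul_lt_mul_of_pos_left (hα_order u v huv) hα) 1

lemma KatzStrictMonoColSum.colSum_le_of_katz_le {A : Matrix V V ℝ} {α : ℝ}
    (hA : KatzStrictMonoColSum A α) {u v : V} (h : katz A α u ≤ katz A α v) :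
    (1 ᵥ* A) u ≤ (1 ᵥ* A) v :=
  not_lt.1 fun hlt => (hA v u hlt).not_ge h

lemma KatzStrictMonoColSum.katz_lt_of_katz_le {A B : Matrix V V ℝ} {α : ℝ}
    (hA : KatzStrictMonoColSum A α) (hB : KatzStrictMonoColSum B α) {z x : V}
    (hz : (1 ᵥ* B) z ≤ (1 ᵥ* A) z) (hx : (1 ᵥ* A) x < (1 ᵥ* B) x)
    (h : katz A α z ≤ katz A α x) : katz B α z < katz B α x :=
  hB z x <| calc
    (1 ᵥ* B) z ≤ (1 ᵥ* A) z := hz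
    _ ≤ (1 ᵥ* A) x := hA.colSum_le_of_katz_le h
    _ < (1 ᵥ* B) x := hx

end Katz

namespace SimpleGraph

variable {V : Type*} {G H : SimpleGraph V} {x y v : V}

lemma one_vecMul_adjMatrix_apply [Fintype V] [DecidableRel G.Adj] {R : Type*}
    [NonAssocSemiring R] (v : V) : (1 ᵥ* G.adjMatrix R) v = G.degree v := by
  simp

lemma degree_eq_of_neighborSet_eq [Fintype (G.neighborSet v)] [Fintype (H.neighborSet v)]
    (h : H.neighborSet v = G.neighborSet v) : H.degree v = G.degree v := by
  rw [← card_neighborSet_eq_degree, ← card_neighborSet_eq_degree]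
  exact Fintype.card_congr' (congrArg _ h)

lemma degree_eq_add_one_of_neighborSet_eq_insert [DecidableEq V] [Fintype (G.neighborSet v)]
    [Fintype (H.neighborSet v)] {w : V} (hw : ¬ G.Adj v w)
    (h : H.neighborSet v = insert w (G.neighborSet v)) : H.degree v = G.degree v + 1 := by
  rw [← card_neighborSet_eq_degree, ← card_neighborSet_eq_degree,
    Fintype.card_congr' (congrArg _ h)]
  exact Set.card_insert (G.neighborSet v) hw

-- Classical, so that its adjacency matrices carry the same `DecidableRel` instances as those
-- in `katz_rank_monotone_small_alpha`.
open scoped Classical in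
lemma katz_adjMatrix_lt_of_katz_le [Fintype V] [DecidableEq V] {α : ℝ}
    (hG : KatzStrictMonoColSum (G.adjMatrix ℝ) α)
    (hH : KatzStrictMonoColSum (H.adjMatrix ℝ) α) {z w : V}
    (hz : H.neighborSet z = G.neighborSet z) (hx : H.neighborSet x = insert w (G.neighborSet x))
    (hw : ¬ G.Adj x w) (h : katz (G.adjMatrix ℝ) α z ≤ katz (G.adjMatrix ℝ) α x) :
    katz (H.adjMatrix ℝ) α z < katz (H.adjMatrix ℝ) α x := by
  refine hG.katz_lt_of_katz_le hH ?_ ?_ h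
  · rw [one_vecMul_adjMatrix_apply, one_vecMul_adjMatrix_apply, degree_eq_of_neighborSet_eq hz]
  · rw [one_vecMul_adjMatrix_apply, one_vecMul_adjMatrix_apply,
      degree_eq_add_one_of_neighborSet_eq_insert hw hx]
    push_cast
    exact lt_add_one _

variable (G)

lemma neighborSet_sup_edge_of_ne (hx : v ≠ x) (hy : v ≠ y) :
    (G ⊔ edge x y).neighborSet v = G.neighborSet v := by
  ext w
  simp [edge_adj, hx, hy]

lemma neighborSet_sup_edge_left (hxy : x ≠ y) :
    (G ⊔ edge x y).neighborSet x = insert y (G.neighborSet x) := by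
  ext w
  simp only [mem_neighborSet, sup_adj, edge_adj, Set.mem_insert_iff]
  grind

lemma neighborSet_sup_edge_right (hxy : x ≠ y) :
    (G ⊔ edge x y).neighborSet y = insert x (G.neighborSet y) := by
  rw [edge_comm, neighborSet_sup_edge_left G hxy.symm]

end SimpleGraph

open SimpleGraph

open scoped Classical in
/-- For every graph `G` there is a threshold `ᾱ`, with `0 < ᾱ < 1/ρ(G)`, such that
for all `0 < α ≤ ᾱ` Katz's index with parameter `α` is strictly rank monotone on
`G`: whenever `G'` is obtained from `G` by adding an edge between non-adjacent
vertices `x` and `y`, every vertex `z ∉ {x, y}` whose Katz score in `G` was at most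
that of `x` (resp. `y`) has Katz score in `G'` strictly less than that of `x`
(resp. `y`). -/
theorem katz_rank_monotone_small_alpha {V : Type*} [Fintype V] [DecidableEq V]
    (G : SimpleGraph V) :
    ∃ ᾱ : ℝ, 0 < ᾱ ∧ ᾱ * specRad (G.adjMatrix ℝ) < 1 ∧
      ∀ α : ℝ, 0 < α → α ≤ ᾱ →
        ∀ x y : V, x ≠ y → ¬ G.Adj x y →
          ∀ G' : SimpleGraph V, G' = G ⊔ SimpleGraph.fromEdgeSet {s(x, y)} →
            ∀ z : V, z ≠ x → z ≠ y →
              (katz (G.adjMatrix ℝ) α z ≤ katz (G.adjMatrix ℝ) α x →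
                katz (G'.adjMatrix ℝ) α z < katz (G'.adjMatrix ℝ) α x) ∧
              (katz (G.adjMatrix ℝ) α z ≤ katz (G.adjMatrix ℝ) α y →
                katz (G'.adjMatrix ℝ) α z < katz (G'.adjMatrix ℝ) α y) := by
  have hsmall : ∀ᶠ α : ℝ in 𝓝[>] 0, α * specRad (G.adjMatrix ℝ) < 1 := by
    refine nhdsWithin_le_nhds (Tendsto.eventually_lt_const zero_lt_one ?_)
    simpa using (continuous_mul_const (specRad (G.adjMatrix ℝ))).tendsto 0
  obtain ⟨u, hu, hgood⟩ := mem_nhdsGT_iff_exists_Ioo_subset.1 <| hsmall.and <|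
    eventually_all.2 fun H : SimpleGraph V => eventually_katzStrictMonoColSum (H.adjMatrix ℝ)
  have hu2 : u / 2 ∈ Set.Ioo 0 u := ⟨half_pos hu, half_lt_self hu⟩
  refine ⟨u / 2, hu2.1, (hgood hu2).1, ?_⟩
  rintro α hα hαu x y hxy hnadj _ rfl z hzx hzy
  have hmono := (hgood ⟨hα, hαu.trans_lt hu2.2⟩).2
  exact ⟨katz_adjMatrix_lt_of_katz_le (hmono G) (hmono _) (G.neighborSet_sup_edge_of_ne hzx hzy)
      (G.neighborSet_sup_edge_left hxy) hnadj,
    katz_adjMatrix_lt_of_katz_le (hmono G) (hmono _) (G.neighborSet_sup_edge_of_ne hzx hzy)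
      (G.neighborSet_sup_edge_right hxy) fun h => hnadj h.symm⟩
end

section
/- For a nonnegative matrix M with spectral radius ρ and a unique (up to scale) strictly positive dominant left eigenvector e (e.g., M irreducible), the normalized resolvent converges to the dominant eigenvector: lim_{α→(1/ρ)⁻} (1 − αρ) · 1 (I − αM)^{-1} = c·e for some constant c > 0, where 1 is the all-ones row vector. -/
/-!
Let `R(α) = (1 - αρ) (I - αM)⁻¹` act on row vectors. For `0 ≤ α < 1/ρ` a minimum principle
(compare a vector with multiples of the positive eigenvector `e`) shows that `I - αM` is
invertible and that `R(α)` is monotone; as `R(α)` fixes `e`, it stays bounded as `α → 1/ρ⁻`.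
Since `α · u(ρI - M)R(α) = (1 - αρ)(u - uR(α))`, the limit of `R(α)` kills the range of
`u ↦ u(ρI - M)`. By uniqueness of `e` the kernel of this map is `ℝ e`, and a vector of both the
kernel and the range, being fixed by `R(α)`, vanishes; so `𝟏 = c e + u(ρI - M)` for some `c`
and `u`, and `𝟏 R(α) → c e`. Finally `𝟏 ≥ δ e` with `δ > 0` gives `c ≥ δ`.
-/

open Filter Matrix Topology

section

variable {n : Type*} [Fintype n]

theorem exists_pos_abs_lt_mul {e : n → ℝ} (he : ∀ i, 0 < e i) (v : n → ℝ) :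
    ∃ C, 0 < C ∧ ∀ i, |v i| < C * e i := by
  have hsum : 0 ≤ ∑ j, |v j| / e j :=
    Finset.sum_nonneg fun j _ => div_nonneg (abs_nonneg _) (he j).le
  refine ⟨1 + ∑ j, |v j| / e j, by linarith, fun i => ?_⟩
  have hi : |v i| / e i ≤ ∑ j, |v j| / e j :=
    Finset.single_le_sum (fun j _ => div_nonneg (abs_nonneg _) (he j).le) (Finset.mem_univ i)
  calc |v i| = |v i| / e i * e i := by field_simp [(he i).ne']
    _ < (1 + ∑ j, |v j| / e j) * e i := by gcongr; exacts [he i, by linarith]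

variable [DecidableEq n] {M : Matrix n n ℝ} {ρ : ℝ} {e : n → ℝ}

theorem nonneg_of_nonneg_vecMul_one_sub_smul (hM : ∀ i j, 0 ≤ M i j) (he : ∀ i, 0 < e i)
    (heig : e ᵥ* M = ρ • e) {α : ℝ} (hα : 0 ≤ α) (hαρ : α * ρ < 1) {x : n → ℝ}
    (hx : 0 ≤ x ᵥ* (1 - α • M)) : 0 ≤ x := by
  by_contra hneg
  obtain ⟨i, hi⟩ : ∃ i, x i < 0 := by simpa [Pi.le_def] using hneg
  obtain ⟨j, -, hj⟩ := Finset.exists_max_image Finset.univ (fun i => -x i / e i)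
    ⟨i, Finset.mem_univ i⟩
  set m := -x j / e j
  have hm : 0 < m := (div_pos (neg_pos.2 hi) (he i)).trans_le (hj i (Finset.mem_univ i))
  have hxj : x j = -m * e j := by simp only [m]; field_simp [(he j).ne']
  have hlow : -m • e ≤ x := fun i => by
    have := hj i (Finset.mem_univ i)
    rw [div_le_iff₀ (he i)] at this
    simp only [Pi.smul_apply, smul_eq_mul]
    linarith
  have hxM : -m * ρ * e j ≤ (x ᵥ* M) j := by
    calc -m * ρ * e j = ((-m • e) ᵥ* M) j := by
          rw [smul_vecMul, heig, smul_smul, Pi.smul_apply, smul_eq_mul]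
      _ ≤ (x ᵥ* M) j := Finset.sum_le_sum fun i _ => mul_le_mul_of_nonneg_right (hlow i) (hM i j)
  have hrow : 0 ≤ x j - α * (x ᵥ* M) j := by
    simpa [vecMul_sub, vecMul_smul] using hx j
  nlinarith [mul_le_mul_of_nonneg_left hxM hα, mul_pos hm (he j)]

theorem isUnit_det_one_sub_smul (hM : ∀ i j, 0 ≤ M i j) (he : ∀ i, 0 < e i)
    (heig : e ᵥ* M = ρ • e) {α : ℝ} (hα : 0 ≤ α) (hαρ : α * ρ < 1) :
    IsUnit (1 - α • M).det := by
  rw [isUnit_iff_ne_zero, Ne, ← exists_vecMul_eq_zero_iff]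
  rintro ⟨x, hx0, hx⟩
  have hnonneg := nonneg_of_nonneg_vecMul_one_sub_smul hM he heig hα hαρ hx.ge
  have hnonpos := nonneg_of_nonneg_vecMul_one_sub_smul hM he heig hα hαρ
    (x := -x) (by rw [neg_vecMul, hx, neg_zero])
  exact hx0 (le_antisymm (neg_nonneg.1 hnonpos) hnonneg)

variable (M ρ) in
noncomputable def rescaledResolvent (α : ℝ) : Matrix n n ℝ :=
  (1 - α * ρ) • (1 - α • M)⁻¹

theorem vecMul_rescaledResolvent_smul_eigenvector (hM : ∀ i j, 0 ≤ M i j)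
    (he : ∀ i, 0 < e i) (heig : e ᵥ* M = ρ • e) {α : ℝ} (hα : 0 ≤ α) (hαρ : α * ρ < 1)
    (t : ℝ) : (t • e) ᵥ* rescaledResolvent M ρ α = t • e := by
  have hA : e ᵥ* (1 - α • M) = (1 - α * ρ) • e := by
    rw [vecMul_sub, vecMul_one, vecMul_smul, heig, smul_smul, sub_smul, one_smul]
  rw [rescaledResolvent, smul_vecMul, vecMul_smul, ← smul_vecMul, ← hA, vecMul_vecMul,
    mul_nonsing_inv _ (isUnit_det_one_sub_smul hM he heig hα hαρ), vecMul_one]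

theorem vecMul_rescaledResolvent_mono (hM : ∀ i j, 0 ≤ M i j) (he : ∀ i, 0 < e i)
    (heig : e ᵥ* M = ρ • e) {α : ℝ} (hα : 0 ≤ α) (hαρ : α * ρ < 1) {v w : n → ℝ}
    (hvw : v ≤ w) : v ᵥ* rescaledResolvent M ρ α ≤ w ᵥ* rescaledResolvent M ρ α := by
  have hx : 0 ≤ (w - v) ᵥ* (1 - α • M)⁻¹ := by
    refine nonneg_of_nonneg_vecMul_one_sub_smul hM he heig hα hαρ ?_
    rw [vecMul_vecMul, nonsing_inv_mul _ (isUnit_det_one_sub_smul hM he heig hα hαρ),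
      vecMul_one]
    exact sub_nonneg.2 hvw
  have hdiff : w ᵥ* rescaledResolvent M ρ α - v ᵥ* rescaledResolvent M ρ α
      = (1 - α * ρ) • ((w - v) ᵥ* (1 - α • M)⁻¹) := by
    rw [← sub_vecMul, rescaledResolvent, vecMul_smul]
  exact sub_nonneg.1 (hdiff ▸ smul_nonneg (by linarith) hx)

theorem eventually_pos_and_mul_lt_one (hρ : 0 < ρ) :
    ∀ᶠ α in 𝓝[<] (1 / ρ), 0 < α ∧ α * ρ < 1 := by
  filter_upwards [(eventually_gt_nhds (one_div_pos.2 hρ)).filter_mono nhdsWithin_le_nhds,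
    self_mem_nhdsWithin] with α hα hαρ
  exact ⟨hα, (lt_div_iff₀ hρ).1 hαρ⟩

theorem isBoundedUnder_norm_vecMul_rescaledResolvent (hM : ∀ i j, 0 ≤ M i j)
    (hρ : 0 < ρ) (he : ∀ i, 0 < e i) (heig : e ᵥ* M = ρ • e) (v : n → ℝ) :
    IsBoundedUnder (· ≤ ·) (𝓝[<] (1 / ρ)) (norm ∘ fun α => v ᵥ* rescaledResolvent M ρ α) := by
  obtain ⟨C, hC, hv⟩ := exists_pos_abs_lt_mul he v
  refine ⟨C * ‖e‖, eventually_map.2 ?_⟩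
  filter_upwards [eventually_pos_and_mul_lt_one hρ] with α ⟨hα, hαρ⟩
  have hupper := vecMul_rescaledResolvent_mono hM he heig hα.le hαρ
    (w := C • e) fun i => (abs_lt.1 (hv i)).2.le
  have hlower := vecMul_rescaledResolvent_mono hM he heig hα.le hαρ
    (v := (-C) • e) fun i => by simpa using (abs_lt.1 (hv i)).1.le
  rw [vecMul_rescaledResolvent_smul_eigenvector hM he heig hα.le hαρ] at hupper hlower
  refine (pi_norm_le_iff_of_nonneg (by positivity)).2 fun i => ?_
  calc ‖(v ᵥ* rescaledResolvent M ρ α) i‖ ≤ C * e i := by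
        rw [Real.norm_eq_abs, abs_le]
        exact ⟨by simpa using hlower i, hupper i⟩
    _ ≤ C * ‖e‖ := by
        gcongr
        exact (le_abs_self _).trans (norm_le_pi_norm e i)

theorem smul_vecMul_smul_one_sub_vecMul_rescaledResolvent {α : ℝ}
    (hdet : IsUnit (1 - α • M).det) (u : n → ℝ) :
    α • ((u ᵥ* (ρ • 1 - M)) ᵥ* rescaledResolvent M ρ α)
      = (1 - α * ρ) • u - (1 - α * ρ) • (u ᵥ* rescaledResolvent M ρ α) := by
  have hsplit : α • (u ᵥ* (ρ • 1 - M)) = u ᵥ* (1 - α • M) - (1 - α * ρ) • u := by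
    ext j
    simp only [vecMul_sub, vecMul_smul, vecMul_one, Pi.smul_apply, Pi.sub_apply, smul_eq_mul]
    ring
  rw [← smul_vecMul, hsplit, sub_vecMul, vecMul_vecMul, rescaledResolvent, mul_smul_comm,
    mul_nonsing_inv _ hdet, vecMul_smul, vecMul_one, smul_vecMul]

theorem tendsto_vecMul_smul_one_sub_vecMul_rescaledResolvent (hM : ∀ i j, 0 ≤ M i j)
    (hρ : 0 < ρ) (he : ∀ i, 0 < e i) (heig : e ᵥ* M = ρ • e) (u : n → ℝ) :
    Tendsto (fun α => (u ᵥ* (ρ • 1 - M)) ᵥ* rescaledResolvent M ρ α) (𝓝[<] (1 / ρ)) (𝓝 0) := by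
  have hgap : Tendsto (fun α : ℝ => 1 - α * ρ) (𝓝[<] (1 / ρ)) (𝓝 0) := by
    have : Tendsto (fun α : ℝ => 1 - α * ρ) (𝓝 (1 / ρ)) (𝓝 (1 - 1 / ρ * ρ)) :=
      (continuous_const.sub (continuous_id.mul continuous_const)).tendsto _
    rw [one_div_mul_cancel hρ.ne', sub_self] at this
    exact this.mono_left nhdsWithin_le_nhds
  have hsmall : Tendsto
      (fun α => (1 - α * ρ) • u - (1 - α * ρ) • (u ᵥ* rescaledResolvent M ρ α))
      (𝓝[<] (1 / ρ)) (𝓝 0) := by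
    simpa using (hgap.smul_const u).sub (hgap.zero_smul_isBoundedUnder_le
      (isBoundedUnder_norm_vecMul_rescaledResolvent hM hρ he heig u))
  have hinv : Tendsto (fun α : ℝ => α⁻¹) (𝓝[<] (1 / ρ)) (𝓝 ρ) := by
    simpa using ((continuousAt_inv₀ (one_div_pos.2 hρ).ne').tendsto).mono_left
      nhdsWithin_le_nhds
  have hlim : Tendsto
      (fun α : ℝ => α⁻¹ • ((1 - α * ρ) • u - (1 - α * ρ) • (u ᵥ* rescaledResolvent M ρ α)))
      (𝓝[<] (1 / ρ)) (𝓝 0) := by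
    simpa using hinv.smul hsmall
  refine hlim.congr' ?_
  filter_upwards [eventually_pos_and_mul_lt_one hρ] with α ⟨hα, hαρ⟩
  rw [← smul_vecMul_smul_one_sub_vecMul_rescaledResolvent
    (isUnit_det_one_sub_smul hM he heig hα.le hαρ), smul_smul, inv_mul_cancel₀ hα.ne', one_smul]

theorem ker_vecMulLinear_smul_one_sub_eq_span (he : ∀ i, 0 < e i) (heig : e ᵥ* M = ρ • e)
    (huniq : ∀ f : n → ℝ, (∀ i, 0 < f i) → f ᵥ* M = ρ • f → ∃ t : ℝ, 0 < t ∧ f = t • e) :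
    LinearMap.ker (ρ • 1 - M).vecMulLinear = ℝ ∙ e := by
  ext f
  rw [LinearMap.mem_ker, vecMulLinear_apply, Submodule.mem_span_singleton, vecMul_sub,
    vecMul_smul, vecMul_one, sub_eq_zero]
  constructor
  · intro hf
    obtain ⟨C, -, hC⟩ := exists_pos_abs_lt_mul he f
    have hpos : ∀ i, 0 < (f + C • e) i := fun i => by
      simp only [Pi.add_apply, Pi.smul_apply, smul_eq_mul]
      linarith [neg_abs_le (f i), hC i]
    obtain ⟨s, -, hs⟩ := huniq (f + C • e) hpos
      (by rw [add_vecMul, smul_vecMul, heig, ← hf, smul_add, smul_comm C ρ e])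
    exact ⟨s - C, by rw [sub_smul, ← hs, add_sub_cancel_right]⟩
  · rintro ⟨t, rfl⟩
    rw [smul_vecMul, heig, smul_comm]

theorem range_vecMulLinear_smul_one_sub_sup_span_eq_top (hM : ∀ i j, 0 ≤ M i j) (hρ : 0 < ρ)
    (he : ∀ i, 0 < e i) (heig : e ᵥ* M = ρ • e)
    (huniq : ∀ f : n → ℝ, (∀ i, 0 < f i) → f ᵥ* M = ρ • f → ∃ t : ℝ, 0 < t ∧ f = t • e) :
    LinearMap.range (ρ • 1 - M).vecMulLinear ⊔ (ℝ ∙ e) = ⊤ := by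
  rw [← ker_vecMulLinear_smul_one_sub_eq_span he heig huniq]
  refine Submodule.eq_top_of_disjoint _ _ (LinearMap.finrank_range_add_finrank_ker _).ge ?_
  rw [ker_vecMulLinear_smul_one_sub_eq_span he heig huniq, Submodule.disjoint_def]
  rintro _ ⟨u, rfl⟩ hu
  obtain ⟨t, ht⟩ := Submodule.mem_span_singleton.1 hu
  rw [vecMulLinear_apply] at ht ⊢
  -- `t • e` is fixed by every `R(α)`, and sent to `0` in the limit
  refine tendsto_nhds_unique (tendsto_const_nhds.congr' ?_)
    (tendsto_vecMul_smul_one_sub_vecMul_rescaledResolvent hM hρ he heig u)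
  filter_upwards [eventually_pos_and_mul_lt_one hρ] with α ⟨hα, hαρ⟩
  rw [← ht, vecMul_rescaledResolvent_smul_eigenvector hM he heig hα.le hαρ]

theorem exists_tendsto_vecMul_rescaledResolvent (hM : ∀ i j, 0 ≤ M i j) (hρ : 0 < ρ)
    (he : ∀ i, 0 < e i) (heig : e ᵥ* M = ρ • e)
    (huniq : ∀ f : n → ℝ, (∀ i, 0 < f i) → f ᵥ* M = ρ • f → ∃ t : ℝ, 0 < t ∧ f = t • e)
    (v : n → ℝ) :
    ∃ c : ℝ, Tendsto (fun α => v ᵥ* rescaledResolvent M ρ α) (𝓝[<] (1 / ρ)) (𝓝 (c • e)) := by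
  obtain ⟨_, ⟨u, rfl⟩, _, hz, huz⟩ := Submodule.mem_sup.1
    ((range_vecMulLinear_smul_one_sub_sup_span_eq_top hM hρ he heig huniq).ge
      (Submodule.mem_top (x := v)))
  obtain ⟨c, rfl⟩ := Submodule.mem_span_singleton.1 hz
  refine ⟨c, ?_⟩
  have hlim := (tendsto_vecMul_smul_one_sub_vecMul_rescaledResolvent hM hρ he heig u).add
    (tendsto_const_nhds (x := c • e))
  rw [zero_add] at hlim
  refine hlim.congr' ?_
  filter_upwards [eventually_pos_and_mul_lt_one hρ] with α ⟨hα, hαρ⟩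
  rw [← huz, add_vecMul, vecMulLinear_apply,
    vecMul_rescaledResolvent_smul_eigenvector hM he heig hα.le hαρ]

end

theorem resolvent_tendsto_perron_eigenvector_general {n : Type*} [Fintype n] [DecidableEq n]
    (M : Matrix n n ℝ) (hM : ∀ i j, 0 ≤ M i j)
    (ρ : ℝ) (hρpos : 0 < ρ)
    (e : n → ℝ) (hepos : ∀ i, 0 < e i)
    (heig : Matrix.vecMul e M = ρ • e)
    (huniq : ∀ f : n → ℝ, (∀ i, 0 < f i) → Matrix.vecMul f M = ρ • f →
      ∃ t : ℝ, 0 < t ∧ f = t • e) :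
    ∃ c : ℝ, 0 < c ∧
      Filter.Tendsto
        (fun α : ℝ => (1 - α * ρ) • Matrix.vecMul (fun _ => (1 : ℝ)) (1 - α • M)⁻¹)
        (nhdsWithin (1 / ρ) (Set.Iio (1 / ρ)))
        (nhds (c • e)) := by
  obtain ⟨c, hc⟩ := exists_tendsto_vecMul_rescaledResolvent hM hρpos hepos heig huniq fun _ => 1
  obtain ⟨C, hC, heC⟩ := exists_pos_abs_lt_mul (fun _ => one_pos) e
  have hlower : C⁻¹ • e ≤ c • e := by
    refine ge_of_tendsto hc ?_
    filter_upwards [eventually_pos_and_mul_lt_one hρpos] with α ⟨hα, hαρ⟩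
    rw [← vecMul_rescaledResolvent_smul_eigenvector hM hepos heig hα.le hαρ]
    refine vecMul_rescaledResolvent_mono hM hepos heig hα.le hαρ fun i => ?_
    simpa [inv_mul_le_iff₀ hC] using (le_abs_self (e i)).trans (heC i).le
  -- `C⁻¹ ≤ c` follows only for nonempty `n`; for empty `n` every vector equals `c • e`
  have hmax : max c C⁻¹ • e = c • e := funext fun i => by
    rw [Pi.smul_apply, Pi.smul_apply,
      max_eq_left (le_of_mul_le_mul_right (hlower i) (hepos i))]
  refine ⟨max c C⁻¹, lt_max_of_lt_right (inv_pos.2 hC), ?_⟩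
  simpa only [hmax, rescaledResolvent, vecMul_smul] using hc

/-- For a nonnegative matrix `M` with spectral radius `ρ > 0` admitting a strictly
positive dominant left eigenvector `e`, unique up to a positive scale factor, the
normalized resolvent applied to the all-ones vector converges, as `α → (1/ρ)⁻`, to
a positive multiple of `e`:
`lim_{α→(1/ρ)⁻} (1 − αρ) · 𝟏 (I − αM)⁻¹ = c • e` with `c > 0`. -/
theorem resolvent_tendsto_perron_eigenvector {n : Type*} [Fintype n] [DecidableEq n]
    (M : Matrix n n ℝ) (hM : ∀ i j, 0 ≤ M i j)
    (ρ : ℝ) (hρ : ρ = specRad M) (hρpos : 0 < ρ)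
    (e : n → ℝ) (hepos : ∀ i, 0 < e i)
    (heig : Matrix.vecMul e M = ρ • e)
    (huniq : ∀ f : n → ℝ, (∀ i, 0 < f i) → Matrix.vecMul f M = ρ • f →
      ∃ t : ℝ, 0 < t ∧ f = t • e) :
    ∃ c : ℝ, 0 < c ∧
      Filter.Tendsto
        (fun α : ℝ => (1 - α * ρ) • Matrix.vecMul (fun _ => (1 : ℝ)) (1 - α • M)⁻¹)
        (nhdsWithin (1 / ρ) (Set.Iio (1 / ρ)))
        (nhds (c • e)) :=
  resolvent_tendsto_perron_eigenvector_general M hM ρ hρpos e hepos heig huniq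
end
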